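/- Define f_0, f_1 : [0,1] → [0,1] by f_0(x) = 2x for 0 ≤ x ≤ 1/2 and f_0(x) = 1 for 1/2 ≤ x ≤ 1; f_1(x) = 0 for 0 ≤ x ≤ 1/2 and f_1(x) = 2x − 1 for 1/2 ≤ x ≤ 1. Then there exists σ ∈ {0,1}^ℕ such that: (a) the non-autonomous system ([0,1], f_σ) is point transitive, i.e., there exists z ∈ [0,1] with {z} ∪ {(f_{σ_n} ∘ ⋯ ∘ f_{σ_1})(z) : n ≥ 1} dense in [0,1]; but (b) it is not topologically transitive: for every n ≥ 1, (f_{σ_n} ∘ ⋯ ∘ f_{σ_1})((1/2, 1)) ∩ (0, 1/2) = ∅. -/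

import Mathlib

/-- `applyWord F u x` is `f_u(x) = f_{u_n} ∘ ⋯ ∘ f_{u_1} (x)` for the word `u = u_1 ⋯ u_n`. -/
def applyWord {X : Type*} {k : ℕ} (F : Fin k → X → X) : List (Fin k) → X → X
  | [], x => x
  | a :: u, x => applyWord F u (F a x)

/-- `f₀(x) = min(2x, 1)` and `f₁(x) = max(2x − 1, 0)`. -/
noncomputable def tentHalves : Fin 2 → ℝ → ℝ :=
  fun i x => if i = 0 then min (2 * x) 1 else max (2 * x - 1) 0

/- ### Auxiliary development -/

/-- The value `0.b₀b₁b₂…` in binary of an infinite bit sequence. -/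
noncomputable def valB (b : ℕ → Bool) : ℝ :=
  ∑' j : ℕ, cond (b j) ((2:ℝ)⁻¹ ^ (j+1)) 0

lemma valB_term_nonneg (b : ℕ → Bool) (j : ℕ) : 0 ≤ cond (b j) ((2:ℝ)⁻¹ ^ (j+1)) 0 := by
  cases b j <;> simp <;> positivity

lemma valB_term_le (b : ℕ → Bool) (j : ℕ) :
    cond (b j) ((2:ℝ)⁻¹ ^ (j+1)) 0 ≤ (2:ℝ)⁻¹ ^ (j+1) := by
  cases b j <;> simp <;> positivity

lemma summable_half : Summable (fun j : ℕ => (2:ℝ)⁻¹ ^ (j+1)) := by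
  have h : Summable (fun j : ℕ => (2:ℝ)⁻¹ ^ j) := summable_geometric_of_lt_one (by norm_num) (by norm_num)
  simpa [pow_succ'] using h.mul_left ((2:ℝ)⁻¹)

lemma valB_summable (b : ℕ → Bool) :
    Summable (fun j : ℕ => cond (b j) ((2:ℝ)⁻¹ ^ (j+1)) 0) :=
  Summable.of_nonneg_of_le (valB_term_nonneg b) (valB_term_le b) summable_half

lemma valB_nonneg (b : ℕ → Bool) : 0 ≤ valB b :=
  tsum_nonneg (valB_term_nonneg b)

lemma tsum_half : (∑' j : ℕ, (2:ℝ)⁻¹ ^ (j+1)) = 1 := by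
  have h : (∑' j : ℕ, (2:ℝ)⁻¹ ^ j) = 2 := by
    rw [tsum_geometric_of_lt_one (by norm_num) (by norm_num)]; norm_num
  have h2 : (∑' j : ℕ, (2:ℝ)⁻¹ ^ (j+1)) = (2:ℝ)⁻¹ * ∑' j : ℕ, (2:ℝ)⁻¹ ^ j := by
    rw [← tsum_mul_left]
    congr 1; funext j; rw [pow_succ']
  rw [h2, h]; norm_num

lemma valB_le_one (b : ℕ → Bool) : valB b ≤ 1 := by
  have h := Summable.tsum_le_tsum (valB_term_le b) (valB_summable b) summable_half
  exact le_trans h (le_of_eq tsum_half)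

lemma valB_step (b : ℕ → Bool) :
    valB b = cond (b 0) ((2:ℝ)⁻¹) 0 + (2:ℝ)⁻¹ * valB (fun j => b (j+1)) := by
  have h := Summable.tsum_eq_zero_add (valB_summable b)
  rw [valB, h]
  congr 1
  · cases b 0 <;> norm_num
  · rw [valB, ← tsum_mul_left]
    congr 1; funext j
    cases b (j+1) <;> simp [pow_succ'] <;> ring

/-- Value of a finite binary word. -/
noncomputable def numW : List Bool → ℝ
  | [] => 0
  | a :: w => (cond a 1 0 + numW w) / 2

lemma numW_snoc (w : List Bool) (a : Bool) :
    numW (w ++ [a]) = numW w + cond a ((2:ℝ)⁻¹ ^ (w.length + 1)) 0 := by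
  induction w with
  | nil => cases a <;> simp [numW] <;> norm_num
  | cons b w ih =>
    rw [show (b :: w) ++ [a] = b :: (w ++ [a]) from rfl,
      show numW (b :: (w ++ [a])) = (cond b 1 0 + numW (w ++ [a])) / 2 from rfl,
      ih, show numW (b :: w) = (cond b 1 0 + numW w) / 2 from rfl, List.length_cons]
    cases a <;> simp [pow_succ] <;> ring

/-- Every point of `[0,1]` is within `2⁻ᵏ` above the value of some word of length `k`. -/
lemma exists_word (k : ℕ) (y : ℝ) (hy : y ∈ Set.Icc (0:ℝ) 1) :
    ∃ w : List Bool, w.length = k ∧ numW w ≤ y ∧ y ≤ numW w + (2:ℝ)⁻¹ ^ k := by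
  induction k with
  | zero =>
    exact ⟨[], rfl, by simpa [numW] using hy.1, by simpa [numW] using hy.2⟩
  | succ k ih =>
    obtain ⟨w, hlen, h1, h2⟩ := ih
    by_cases h : y ≤ numW w + (2:ℝ)⁻¹ ^ (k+1)
    · refine ⟨w ++ [false], by simp [hlen], ?_, ?_⟩
      · rw [numW_snoc]; simpa using h1
      · rw [numW_snoc]; simpa using h
    · refine ⟨w ++ [true], by simp [hlen], ?_, ?_⟩
      · rw [numW_snoc, hlen]; simpa using (not_le.1 h).le
      · rw [numW_snoc, hlen]
        have : numW w + (2:ℝ)⁻¹ ^ (k+1) + (2:ℝ)⁻¹ ^ (k+1) = numW w + (2:ℝ)⁻¹ ^ k := by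
          rw [pow_succ]; ring
        simp only [cond]
        linarith [h2, this]

/-- If `c` starts with the word `w`, then `valB c` lies in the corresponding dyadic interval. -/
lemma valB_of_prefix :
    ∀ (w : List Bool) (c : ℕ → Bool), (∀ i (h : i < w.length), c i = w.get ⟨i, h⟩) →
      valB c = numW w + (2:ℝ)⁻¹ ^ w.length * valB (fun j => c (j + w.length)) := by
  intro w
  induction w with
  | nil => intro c _; simp [numW]
  | cons a w ih =>
    intro c hc
    have h0 : c 0 = a := hc 0 (by simp)
    have hshift : ∀ i (h : i < w.length), (fun j => c (j+1)) i = w.get ⟨i, h⟩ := by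
      intro i h
      have := hc (i+1) (by simpa using Nat.succ_lt_succ h)
      simpa using this
    have hrec := ih (fun j => c (j+1)) hshift
    have hstep := valB_step c
    rw [hstep, h0, hrec]
    have hcomp : (valB fun j => (fun j => c (j + 1)) (j + w.length)) =
        valB fun j => c (j + (a :: w).length) := by
      rfl
    rw [hcomp]
    rw [show numW (a :: w) = (cond a 1 0 + numW w) / 2 from rfl, List.length_cons]
    cases a <;> simp [pow_succ] <;> ring

/-- `m`-th block: a `false` separator followed by the `m`-th finite word. -/
def blockW (m : ℕ) : List Bool := false :: (Encodable.decode m).getD ([] : List Bool)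

/-- Concatenation of the first `n` blocks. -/
def Lpre (n : ℕ) : List Bool := (List.range n).flatMap blockW

lemma Lpre_succ (n : ℕ) : Lpre (n+1) = Lpre n ++ blockW n := by
  simp [Lpre, List.range_succ]

lemma Lpre_prefix {m n : ℕ} (h : m ≤ n) : Lpre m <+: Lpre n := by
  induction n with
  | zero => rw [Nat.le_zero.1 h]
  | succ n ih =>
    rcases Nat.lt_or_ge m (n+1) with h' | h'
    · exact (ih (Nat.lt_succ_iff.1 h')).trans
        (by rw [Lpre_succ]; exact List.prefix_append _ _)
    · rw [le_antisymm h h']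

lemma Lpre_length_ge (n : ℕ) : n ≤ (Lpre n).length := by
  induction n with
  | zero => simp
  | succ n ih =>
    rw [Lpre_succ, List.length_append]
    have : 1 ≤ (blockW n).length := by simp [blockW]
    omega

/-- The universal bit sequence. -/
def bseq (j : ℕ) : Bool := (Lpre (j+1)).getD j false

lemma bseq_eq_getD {N j : ℕ} (h : j < (Lpre N).length) :
    bseq j = (Lpre N).getD j false := by
  rcases le_total N (j+1) with hN | hN
  · have hpre := Lpre_prefix hN
    rw [bseq, List.getD_eq_getElem _ _ h,
      List.getD_eq_getElem _ _ (lt_of_lt_of_le h hpre.length_le)]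
    exact (hpre.getElem h).symm
  · have hpre := Lpre_prefix hN
    have hj : j < (Lpre (j+1)).length := lt_of_lt_of_le (Nat.lt_succ_self j) (Lpre_length_ge _)
    rw [bseq, List.getD_eq_getElem _ _ h, List.getD_eq_getElem _ _ hj]
    exact hpre.getElem hj

/-- Every word occurs in `bseq` at some position. -/
lemma exists_occurrence (w : List Bool) :
    ∃ n : ℕ, ∀ i (h : i < w.length), bseq (n + i) = w.get ⟨i, h⟩ := by
  set m := Encodable.encode w with hm
  have hblock : blockW m = false :: w := by
    simp [blockW, hm]
  refine ⟨(Lpre m).length + 1, ?_⟩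
  intro i hi
  have hlen : (Lpre (m+1)).length = (Lpre m).length + 1 + w.length := by
    rw [Lpre_succ, List.length_append, hblock]; simp; omega
  have hbound : (Lpre m).length + 1 + i < (Lpre (m+1)).length := by omega
  rw [bseq_eq_getD hbound, Lpre_succ,
    List.getD_append_right _ _ _ _ (by omega),
    show (Lpre m).length + 1 + i - (Lpre m).length = i + 1 from by omega,
    hblock, List.getD_cons_succ, List.getD_eq_getElem _ _ hi]
  simp [List.get_eq_getElem]

lemma bseq_zero : bseq 0 = false := by
  have h0 : (0:ℕ) < (Lpre 1).length := lt_of_lt_of_le (by norm_num) (Lpre_length_ge 1)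
  rw [bseq_eq_getD h0, List.getD_eq_getElem _ _ h0]
  have : Lpre 1 = blockW 0 := by
    rw [show (1:ℕ) = 0 + 1 from rfl, Lpre_succ]; simp [Lpre]
  simp [this, blockW]

/-- One step of the dynamics is the binary shift. -/
lemma tent0 (x : ℝ) : tentHalves 0 x = min (2 * x) 1 := by simp [tentHalves]

lemma tent1 (x : ℝ) : tentHalves 1 x = max (2 * x - 1) 0 := by
  simp [tentHalves]

lemma tent_step (c : ℕ → Bool) :
    tentHalves (if c 0 then 1 else 0) (valB c) = valB (fun j => c (j+1)) := by
  set V := valB (fun j => c (j+1)) with hV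
  have h0 : 0 ≤ V := valB_nonneg _
  have h1 : V ≤ 1 := valB_le_one _
  have hstep := valB_step c
  cases hc : c 0 with
  | false =>
    rw [hc] at hstep
    simp only [cond] at hstep
    simp only [hc, Bool.false_eq_true, if_false]
    rw [tent0, hstep]
    rw [show 2 * (0 + 2⁻¹ * V) = V from by ring, min_eq_left h1]
  | true =>
    rw [hc] at hstep
    simp only [cond] at hstep
    simp only [hc, if_true]
    rw [tent1, hstep]
    rw [show 2 * (2⁻¹ + 2⁻¹ * V) - 1 = V from by ring, max_eq_left h0]

/-- Iterating along the digits of `c` realizes the shift. -/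
lemma applyWord_val :
    ∀ (u : List (Fin 2)) (c : ℕ → Bool),
      (∀ i (hi : i < u.length), u.get ⟨i, hi⟩ = (if c i then 1 else 0)) →
      applyWord tentHalves u (valB c) = valB (fun j => c (j + u.length)) := by
  intro u
  induction u with
  | nil => intro c _; simp [applyWord]
  | cons a u ih =>
    intro c hc
    have h0 : a = (if c 0 then 1 else 0) := hc 0 (by simp)
    have hshift : ∀ i (hi : i < u.length),
        u.get ⟨i, hi⟩ = (if (fun j => c (j+1)) i then 1 else 0) := by
      intro i hi
      have := hc (i+1) (by simpa using Nat.succ_lt_succ hi)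
      simpa using this
    show applyWord tentHalves u (tentHalves a (valB c)) = _
    rw [h0, tent_step c, ih _ hshift]
    rfl

lemma applyWord_one : ∀ u : List (Fin 2), applyWord tentHalves u 1 = 1 := by
  intro u
  induction u with
  | nil => rfl
  | cons a u ih =>
    show applyWord tentHalves u (tentHalves a 1) = 1
    have : tentHalves a 1 = 1 := by
      fin_cases a <;> simp [tentHalves] <;> norm_num
    rw [this, ih]

/-- There is `σ ∈ {0,1}^ℕ` such that the non-autonomous system `([0,1], f_σ)` is point
transitive but not topologically transitive: for every `n ≥ 1`,
`f_{σ_1⋯σ_n}((1/2, 1)) ∩ (0, 1/2) = ∅`. -/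
theorem stmt19 :
    ∃ σ : ℕ → Fin 2,
      (∃ z ∈ Set.Icc (0 : ℝ) 1, Set.Icc (0 : ℝ) 1 ⊆
        closure (Set.range fun n : ℕ =>
          applyWord tentHalves (List.ofFn fun i : Fin n => σ i) z)) ∧
      ∀ n : ℕ, 1 ≤ n →
        (applyWord tentHalves (List.ofFn fun i : Fin n => σ i)) '' Set.Ioo (1 / 2 : ℝ) 1 ∩
          Set.Ioo (0 : ℝ) (1 / 2) = ∅ := by
  refine ⟨fun i => if bseq i then 1 else 0, ?_, ?_⟩
  · -- point transitivity
    refine ⟨valB bseq, ⟨valB_nonneg _, valB_le_one _⟩, ?_⟩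
    intro y hy
    rw [Metric.mem_closure_iff]
    intro ε hε
    obtain ⟨k, hk⟩ := exists_pow_lt_of_lt_one hε (show (2:ℝ)⁻¹ < 1 by norm_num)
    obtain ⟨w, hwlen, hw1, hw2⟩ := exists_word k y hy
    obtain ⟨n, hn⟩ := exists_occurrence w
    refine ⟨_, Set.mem_range_self n, ?_⟩
    have horbit : applyWord tentHalves (List.ofFn fun i : Fin n =>
        (if bseq i then 1 else 0 : Fin 2)) (valB bseq) = valB (fun j => bseq (j + n)) := by
      have := applyWord_val (List.ofFn fun i : Fin n => (if bseq i then 1 else 0 : Fin 2))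
        bseq ?_
      · simpa [List.length_ofFn] using this
      · intro i hi
        simp only [List.get_ofFn]
        rfl
    have hpref : ∀ i (h : i < w.length), (fun j => bseq (j + n)) i = w.get ⟨i, h⟩ := by
      intro i h
      simpa [Nat.add_comm] using hn i h
    have hval := valB_of_prefix w (fun j => bseq (j + n)) hpref
    set t := valB (fun j => (fun j => bseq (j + n)) (j + w.length)) with ht
    have ht0 : 0 ≤ t := valB_nonneg _
    have ht1 : t ≤ 1 := valB_le_one _
    have hxlow : numW w ≤ valB (fun j => bseq (j + n)) := by
      rw [hval]
      have : 0 ≤ (2:ℝ)⁻¹ ^ w.length * t := by positivity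
      linarith
    have hxhigh : valB (fun j => bseq (j + n)) ≤ numW w + (2:ℝ)⁻¹ ^ k := by
      rw [hval, hwlen]
      have hpos : (0:ℝ) < (2:ℝ)⁻¹ ^ k := by positivity
      nlinarith
    rw [horbit, Real.dist_eq, abs_sub_comm]
    have : |valB (fun j => bseq (j + n)) - y| ≤ (2:ℝ)⁻¹ ^ k := by
      rw [abs_le]; constructor <;> linarith
    linarith
  · -- not topologically transitive
    intro n hn
    obtain ⟨m, rfl⟩ : ∃ m, n = m + 1 := ⟨n - 1, by omega⟩
    rw [Set.eq_empty_iff_forall_notMem]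
    rintro x ⟨⟨v, hv, hvx⟩, hx⟩
    have hofn : (List.ofFn fun i : Fin (m+1) => (if bseq i then 1 else 0 : Fin 2)) =
        (if bseq 0 then 1 else 0 : Fin 2) ::
          (List.ofFn fun i : Fin m => (if bseq (i+1) then 1 else 0 : Fin 2)) := by
      rw [List.ofFn_succ]; rfl
    rw [hofn, bseq_zero] at hvx
    simp only [if_neg (by simp : ¬(false = true))] at hvx
    have hstep : tentHalves 0 v = 1 := by
      rw [tent0, min_eq_right (by linarith [hv.1] : (1:ℝ) ≤ 2 * v)]
    have : x = 1 := by
      rw [← hvx]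
      show applyWord tentHalves _ (tentHalves 0 v) = 1
      rw [hstep, applyWord_one]
    rw [this] at hx
    obtain ⟨_, h2⟩ := hx
    linarith
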